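/- Let c > 0, let f : ℝ^d → ℝ be convex and differentiable attaining its minimum f* at x*, and let h : ℝ^d → ℝ be convex and differentiable. Let X : [0, ∞) → ℝ^d be twice continuously differentiable and satisfy the exp-Nesterov flow: with Z_t = X_t + (1/c) Ẋ_t, the curve satisfies d/dt ∇h(Z_t) = −c e^{ct} ∇f(X_t). Then for all t ≥ 0, f(X_t) − f* ≤ ( f(X_0) − f* + D_h(x*, X_0 + (1/c) Ẋ_0) ) · e^{−ct}. -/

import Mathlib

open scoped RealInnerProductSpace
open Real Set

noncomputable section

/-- Bregman divergence `D_h(y, x) = h(y) − h(x) − ⟨∇h(x), y − x⟩`. -/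
def breg (d : ℕ) (h : EuclideanSpace ℝ (Fin d) → ℝ)
    (y x : EuclideanSpace ℝ (Fin d)) : ℝ :=
  h y - h x - ⟪gradient h x, y - x⟫

/-! The energy `E(t) = e^{ct} (f(X_t) − f*) + D_h(x*, Z_t)`, with `Z_t = X_t + Ẋ_t / c`, is
nonincreasing. Indeed `d/dt D_h(x*, Z_t) = ⟪d/dt ∇h(Z_t), Z_t − x*⟫`, which along the flow is
`−c e^{ct} ⟪∇f(X_t), X_t + Ẋ_t / c − x*⟫`; its `Ẋ_t` term cancels against the derivative of
the first summand, leaving `E'(t) = c e^{ct} (f(X_t) − f* − ⟪∇f(X_t), X_t − x*⟫)`, which is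
`≤ 0` by convexity of `f`. Since `D_h ≥ 0` by convexity of `h`,
`e^{ct} (f(X_t) − f*) ≤ E(t) ≤ E(0)`. -/

section Gradient

variable {E : Type*} [NormedAddCommGroup E] [InnerProductSpace ℝ E] [CompleteSpace E]
  {f : E → ℝ}

theorem HasGradientAt.comp_hasDerivAt {g v : E} {X : ℝ → E} {t : ℝ}
    (hf : HasGradientAt f g (X t)) (hX : HasDerivAt X v t) :
    HasDerivAt (fun s => f (X s)) ⟪g, v⟫ t := by
  have h := (hasGradientAt_iff_hasFDerivAt.mp hf).comp_hasDerivAt t hX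
  simp only [InnerProductSpace.toDual_apply_apply] at h
  exact h

theorem ConvexOn.inner_gradient_le_sub (hconv : ConvexOn ℝ univ f) {x : E}
    (hf : DifferentiableAt ℝ f x) (y : E) :
    ⟪gradient f x, y - x⟫ ≤ f y - f x := by
  have hline : ∀ s : ℝ, AffineMap.lineMap x y s = x + s • (y - x) := fun s => by
    rw [AffineMap.lineMap_apply, vsub_eq_sub, vadd_eq_add, add_comm]
  have hconv_line : ConvexOn ℝ univ (fun s : ℝ => f (x + s • (y - x))) := by
    simpa [Function.comp_def, hline] using
      hconv.comp_affineMap (AffineMap.lineMap x y : ℝ →ᵃ[ℝ] E)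
  have hderiv : HasDerivAt (fun s : ℝ => f (x + s • (y - x))) ⟪gradient f x, y - x⟫ 0 := by
    refine HasGradientAt.comp_hasDerivAt (X := fun s : ℝ => x + s • (y - x)) ?_ ?_
    · simpa using hf.hasGradientAt
    · simpa using ((hasDerivAt_id (0 : ℝ)).smul_const (y - x)).const_add x
  simpa [slope_def_field] using
    hconv_line.le_slope_of_hasDerivAt (mem_univ 0) (mem_univ 1) one_pos hderiv

end Gradient

section Bregman

variable {d : ℕ} {h : EuclideanSpace ℝ (Fin d) → ℝ}

theorem breg_nonneg (hconv : ConvexOn ℝ univ h) {x : EuclideanSpace ℝ (Fin d)}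
    (hx : DifferentiableAt ℝ h x) (y : EuclideanSpace ℝ (Fin d)) : 0 ≤ breg d h y x := by
  have := hconv.inner_gradient_le_sub hx y
  unfold breg
  linarith

-- The two terms involving `Ż` cancel.
theorem hasDerivAt_breg_comp {y z' g' : EuclideanSpace ℝ (Fin d)}
    {Z : ℝ → EuclideanSpace ℝ (Fin d)} {t : ℝ}
    (hh : DifferentiableAt ℝ h (Z t)) (hZ : HasDerivAt Z z' t)
    (hgrad : HasDerivAt (fun s => gradient h (Z s)) g' t) :
    HasDerivAt (fun s => breg d h y (Z s)) ⟪g', Z t - y⟫ t := by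
  have hterm := hgrad.inner ℝ ((hasDerivAt_const t y).fun_sub hZ)
  refine (((hasDerivAt_const t (h y)).fun_sub
    (hh.hasGradientAt.comp_hasDerivAt hZ)).fun_sub hterm).congr_deriv ?_
  simp only [inner_sub_right, inner_zero_right]
  ring

end Bregman

def expNesterovEnergy (d : ℕ) (c : ℝ) (f h : EuclideanSpace ℝ (Fin d) → ℝ)
    (xstar : EuclideanSpace ℝ (Fin d)) (X X' : ℝ → EuclideanSpace ℝ (Fin d)) (s : ℝ) : ℝ :=
  exp (c * s) * (f (X s) - f xstar) + breg d h xstar (X s + (1 / c) • X' s)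

section Lyapunov

variable {d : ℕ} {c : ℝ} {f h : EuclideanSpace ℝ (Fin d) → ℝ}
  {xstar : EuclideanSpace ℝ (Fin d)} {X X' X'' : ℝ → EuclideanSpace ℝ (Fin d)} {t : ℝ}

theorem hasDerivAt_expNesterovEnergy (hc : c ≠ 0) (hf : DifferentiableAt ℝ f (X t))
    (hh : DifferentiableAt ℝ h (X t + (1 / c) • X' t))
    (hX : HasDerivAt X (X' t) t) (hX' : HasDerivAt X' (X'' t) t)
    (hflow : HasDerivAt (fun s => gradient h (X s + (1 / c) • X' s))
      (-(c * exp (c * t)) • gradient f (X t)) t) :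
    HasDerivAt (expNesterovEnergy d c f h xstar X X')
      (c * exp (c * t) * (f (X t) - f xstar + ⟪gradient f (X t), xstar - X t⟫)) t := by
  have hexp : HasDerivAt (fun s => exp (c * s)) (c * exp (c * t)) t := by
    simpa [mul_comm] using ((hasDerivAt_id t).const_mul c).exp
  have hfX := (hf.hasGradientAt.comp_hasDerivAt hX).sub_const (f xstar)
  have hbreg := hasDerivAt_breg_comp (y := xstar) hh (hX.add (hX'.const_smul (1 / c))) hflow
  refine (hexp.mul hfX |>.add hbreg).congr_deriv ?_
  simp only [Pi.add_apply, Pi.smul_apply, real_inner_smul_left, inner_add_right,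
    inner_sub_right, real_inner_smul_right]
  field_simp
  ring

theorem antitoneOn_expNesterovEnergy (hc : 0 < c) (hconv : ConvexOn ℝ univ f)
    (hf : Differentiable ℝ f) (hh : Differentiable ℝ h)
    (hX : ∀ t ≥ (0 : ℝ), HasDerivAt X (X' t) t)
    (hX' : ∀ t ≥ (0 : ℝ), HasDerivAt X' (X'' t) t)
    (hflow : ∀ t ≥ (0 : ℝ), HasDerivAt (fun s => gradient h (X s + (1 / c) • X' s))
      (-(c * exp (c * t)) • gradient f (X t)) t) :
    AntitoneOn (expNesterovEnergy d c f h xstar X X') (Ici 0) := by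
  have hderiv (t : ℝ) (ht : 0 ≤ t) := hasDerivAt_expNesterovEnergy (xstar := xstar) hc.ne'
    (hf _) (hh _) (hX t ht) (hX' t ht) (hflow t ht)
  refine antitoneOn_of_hasDerivWithinAt_nonpos (convex_Ici 0)
    (fun t ht => (hderiv t ht).continuousAt.continuousWithinAt)
    (fun t ht => (hderiv t (interior_subset ht)).hasDerivWithinAt) fun t _ => ?_
  have := hconv.inner_gradient_le_sub (hf (X t)) xstar
  exact mul_nonpos_of_nonneg_of_nonpos (by positivity) (by linarith)

end Lyapunov

theorem exp_nesterov_flow_rate_general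
    (d : ℕ) (c : ℝ) (hc : 0 < c)
    (f h : EuclideanSpace ℝ (Fin d) → ℝ)
    (hconv : ConvexOn ℝ Set.univ f) (hf : Differentiable ℝ f)
    (hhconv : ConvexOn ℝ Set.univ h) (hh : Differentiable ℝ h)
    (xstar : EuclideanSpace ℝ (Fin d))
    (X X' X'' : ℝ → EuclideanSpace ℝ (Fin d))
    (hX : ∀ t ≥ (0 : ℝ), HasDerivAt X (X' t) t)
    (hX' : ∀ t ≥ (0 : ℝ), HasDerivAt X' (X'' t) t)
    (hflow : ∀ t ≥ (0 : ℝ),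
      HasDerivAt (fun s => gradient h (X s + (1 / c) • X' s))
        (-(c * Real.exp (c * t)) • gradient f (X t)) t) :
    ∀ t ≥ (0 : ℝ),
      f (X t) - f xstar ≤
        (f (X 0) - f xstar + breg d h xstar (X 0 + (1 / c) • X' 0)) *
          Real.exp (-(c * t)) := by
  intro t ht
  have hdecay :
      expNesterovEnergy d c f h xstar X X' t ≤ expNesterovEnergy d c f h xstar X X' 0 :=
    antitoneOn_expNesterovEnergy hc hconv hf hh hX hX' hflow self_mem_Ici ht ht
  have hbreg := breg_nonneg hhconv (hh (X t + (1 / c) • X' t)) xstar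
  rw [exp_neg, ← div_eq_mul_inv, le_div_iff₀ (exp_pos _)]
  simp only [expNesterovEnergy, mul_zero, exp_zero, one_mul] at hdecay
  linarith

theorem exp_nesterov_flow_rate
    (d : ℕ) (c : ℝ) (hc : 0 < c)
    (f h : EuclideanSpace ℝ (Fin d) → ℝ)
    (hconv : ConvexOn ℝ Set.univ f) (hf : Differentiable ℝ f)
    (hhconv : ConvexOn ℝ Set.univ h) (hh : Differentiable ℝ h)
    (xstar : EuclideanSpace ℝ (Fin d)) (hmin : ∀ x, f xstar ≤ f x)
    (X X' X'' : ℝ → EuclideanSpace ℝ (Fin d))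
    (hX : ∀ t ≥ (0 : ℝ), HasDerivAt X (X' t) t)
    (hX' : ∀ t ≥ (0 : ℝ), HasDerivAt X' (X'' t) t)
    (hX''cont : ContinuousOn X'' (Set.Ici 0))
    (hflow : ∀ t ≥ (0 : ℝ),
      HasDerivAt (fun s => gradient h (X s + (1 / c) • X' s))
        (-(c * Real.exp (c * t)) • gradient f (X t)) t) :
    ∀ t ≥ (0 : ℝ),
      f (X t) - f xstar ≤
        (f (X 0) - f xstar + breg d h xstar (X 0 + (1 / c) • X' 0)) *
          Real.exp (-(c * t)) :=
  exp_nesterov_flow_rate_general d c hc f h hconv hf hhconv hh xstar X X' X'' hX hX' hflow
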